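/- arXiv:2410.02111 — 3 statements merged into one kernel-verified Lean document; each statement's English description precedes it below -/
import Mathlib

section
/- Theorem 1 (fiberwise distance estimator sandwich bound, differentiable version). Suppose U ⊆ E × F is an open convex set containing both (x*, 0) and (x*, y*), B : E × F → E × F is differentiable on U with B(x*, 0) = 0 and ‖fderiv B z‖ ≤ C_G for every z ∈ U, and u₀ ∈ E satisfies ‖u₀‖ ≤ v₀, where C_G ≥ 0 and v₀ ≥ 0. Define the vector field v(x, y) = (u₀, A₁ y) + B(x, y) on E × F, let H be the Fréchet derivative of v at the point z* = (x*, y*), and define the fiberwise distance estimator f = ‖H (v(x*, y*))‖. Then C₋² ‖y*‖ − E(‖y*‖) ≤ f ≤ C₊² ‖y*‖ + E(‖y*‖), where E(ρ) = C_G ((2 C₊ + C_G) ρ + v₀). -/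
/-!
Write `z* = (x*, y*)`, `D = fderiv B z*` and `w = v z*`. As `v - B` is affine with linear
part `(x, y) ↦ (0, A₁ y)`, `H = prodMap 0 A₁ + D`, so `H w = (0, A₁ w₂) + D w` and `f` differs
from `‖A₁ w₂‖` by at most `C_G ‖w‖`. The mean value theorem on the segment from `(x*, 0)` to
`z*` gives `‖B z*‖ ≤ C_G ‖y*‖`, so `‖w₂‖` differs from `‖A₁ y*‖` by at most `C_G ‖y*‖` and
`‖w‖ ≤ (C₊ + C_G) ‖y*‖ + v₀`. Applying the two-sided bound on `A₁` twice gives the sandwich.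
-/

open ContinuousLinearMap

section TwoSidedBound

variable {F G : Type*} [NormedAddCommGroup F] [NormedAddCommGroup G]
  {A : F → G} {Cminus Cplus : ℝ} (hA : ∀ w, Cminus * ‖w‖ ≤ ‖A w‖ ∧ ‖A w‖ ≤ Cplus * ‖w‖)
include hA

lemma norm_apply_le_of_abs_norm_sub_norm_apply_le (hCplus : 0 ≤ Cplus) {w y : F} {ε : ℝ}
    (h : |‖w‖ - ‖A y‖| ≤ ε) : ‖A w‖ ≤ Cplus * (Cplus * ‖y‖ + ε) :=
  calc ‖A w‖ ≤ Cplus * ‖w‖ := (hA w).2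
    _ ≤ Cplus * (Cplus * ‖y‖ + ε) := by
      gcongr
      linarith [(hA y).2, (abs_le.1 h).2]

lemma le_norm_apply_of_abs_norm_sub_norm_apply_le (hCminus : 0 ≤ Cminus) {w y : F} {ε : ℝ}
    (h : |‖w‖ - ‖A y‖| ≤ ε) : Cminus * (Cminus * ‖y‖ - ε) ≤ ‖A w‖ :=
  calc Cminus * (Cminus * ‖y‖ - ε) ≤ Cminus * ‖w‖ := by
        gcongr
        linarith [(hA y).1, (abs_le.1 h).1]
    _ ≤ ‖A w‖ := (hA w).1

end TwoSidedBound

section Product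

variable {E F G : Type*} [NormedAddCommGroup E] [NormedSpace ℝ E]
  [NormedAddCommGroup F] [NormedSpace ℝ F] [NormedAddCommGroup G] [NormedSpace ℝ G]

lemma hasFDerivAt_const_prodMk_apply_snd (c : E) (A : F →L[ℝ] G) (z : E × F) :
    HasFDerivAt (fun p : E × F => (c, A p.2)) (prodMap (0 : E →L[ℝ] E) A) z := by
  have := (hasFDerivAt_const c z).prodMk (A.hasFDerivAt.comp z hasFDerivAt_snd)
  refine this.congr_fderiv ?_
  ext <;> simp

lemma abs_norm_prodMap_zero_add_apply_sub_le (A : F →L[ℝ] G) (D : E × F →L[ℝ] E × G)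
    (w : E × F) : |‖(prodMap (0 : E →L[ℝ] E) A + D) w‖ - ‖A w.2‖| ≤ ‖D‖ * ‖w‖ := by
  have hAw : ‖A w.2‖ = ‖((0 : E), A w.2)‖ := by simp
  have hDw : (prodMap (0 : E →L[ℝ] E) A + D) w - ((0 : E), A w.2) = D w := by
    ext <;> simp
  rw [hAw]
  exact (abs_norm_sub_norm_le _ _).trans (hDw ▸ D.le_opNorm w)

lemma Convex.norm_image_mk_le {B : E × F → G} {U : Set (E × F)} {C : ℝ} (hU : Convex ℝ U)
    (hBdiff : ∀ z ∈ U, DifferentiableAt ℝ B z) (hBderiv : ∀ z ∈ U, ‖fderiv ℝ B z‖ ≤ C)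
    {x : E} {y : F} (h0 : (x, (0 : F)) ∈ U) (hy : (x, y) ∈ U) (hB0 : B (x, 0) = 0) :
    ‖B (x, y)‖ ≤ C * ‖y‖ := by
  simpa [hB0] using hU.norm_image_sub_le_of_norm_fderiv_le hBdiff hBderiv h0 hy

end Product

theorem fiberwise_distance_estimator_sandwich_differentiable_general
    {E F : Type*} [NormedAddCommGroup E] [NormedSpace ℝ E]
    [NormedAddCommGroup F] [NormedSpace ℝ F]
    (A₁ : F →L[ℝ] F) (Cminus Cplus : ℝ) (hCminus : 0 ≤ Cminus) (hCplus : 0 ≤ Cplus)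
    (hA₁ : ∀ w : F, Cminus * ‖w‖ ≤ ‖A₁ w‖ ∧ ‖A₁ w‖ ≤ Cplus * ‖w‖)
    (xs : E) (ys : F)
    (CG v₀ : ℝ)
    (U : Set (E × F)) (hUconv : Convex ℝ U)
    (h0U : ((xs, (0 : F)) : E × F) ∈ U) (hzU : ((xs, ys) : E × F) ∈ U)
    (B : E × F → E × F) (hBdiff : ∀ z ∈ U, DifferentiableAt ℝ B z)
    (hB0 : B (xs, (0 : F)) = 0)
    (hBderiv : ∀ z ∈ U, ‖fderiv ℝ B z‖ ≤ CG)
    (u₀ : E) (hu₀ : ‖u₀‖ ≤ v₀)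
    (v : E × F → E × F)
    (hv : v = fun p : E × F => ((u₀, A₁ p.2) : E × F) + B p)
    (H : (E × F) →L[ℝ] (E × F)) (hH : H = fderiv ℝ v (xs, ys))
    (f : ℝ) (hf : f = ‖H (v (xs, ys))‖)
    (Err : ℝ → ℝ) (hErr : Err = fun ρ => CG * ((2 * Cplus + CG) * ρ + v₀)) :
    Cminus ^ 2 * ‖ys‖ - Err ‖ys‖ ≤ f ∧ f ≤ Cplus ^ 2 * ‖ys‖ + Err ‖ys‖ := by
  subst hv hH hf hErr
  set D := fderiv ℝ B (xs, ys)
  set w : E × F := (u₀, A₁ ys) + B (xs, ys)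
  have hD : ‖D‖ ≤ CG := hBderiv _ hzU
  have hCG : 0 ≤ CG := (norm_nonneg D).trans hD
  have hderiv : fderiv ℝ (fun p : E × F => ((u₀, A₁ p.2) : E × F) + B p) (xs, ys) =
      prodMap (0 : E →L[ℝ] E) A₁ + D :=
    ((hasFDerivAt_const_prodMk_apply_snd u₀ A₁ _).add (hBdiff _ hzU).hasFDerivAt).fderiv
  have hBz : ‖B (xs, ys)‖ ≤ CG * ‖ys‖ := hUconv.norm_image_mk_le hBdiff hBderiv h0U hzU hB0
  have hw₂ : |‖w.2‖ - ‖A₁ ys‖| ≤ CG * ‖ys‖ :=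
    (abs_norm_sub_norm_le _ _).trans (by simpa [w] using (_root_.norm_snd_le _).trans hBz)
  have hw : ‖w‖ ≤ Cplus * ‖ys‖ + v₀ + CG * ‖ys‖ := by
    have hu : ‖((u₀, A₁ ys) : E × F)‖ ≤ Cplus * ‖ys‖ + v₀ := by
      rw [Prod.norm_mk]
      exact max_le (by linarith [(hA₁ ys).2, norm_nonneg (A₁ ys)])
        (by linarith [(hA₁ ys).2, norm_nonneg u₀])
    exact (norm_add_le _ _).trans (add_le_add hu hBz)
  have hHw := (abs_norm_prodMap_zero_add_apply_sub_le A₁ D w).trans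
    (mul_le_mul hD hw (norm_nonneg _) hCG)
  have hup := norm_apply_le_of_abs_norm_sub_norm_apply_le hA₁ hCplus hw₂
  have hlow := le_norm_apply_of_abs_norm_sub_norm_apply_le hA₁ hCminus hw₂
  have hCC : Cminus * ‖ys‖ ≤ Cplus * ‖ys‖ := (hA₁ ys).1.trans (hA₁ ys).2
  rw [hderiv]
  beta_reduce
  obtain ⟨hHw_lo, hHw_hi⟩ := abs_le.1 hHw
  constructor <;> nlinarith [mul_le_mul_of_nonneg_left hCC hCG]

/-- **Theorem 1 (fiberwise distance estimator sandwich bound, differentiable version).**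
`E × F` carries the product (max) norm. `A₁ : F →L[ℝ] F` satisfies
`C₋ ‖w‖ ≤ ‖A₁ w‖ ≤ C₊ ‖w‖`. `U` is an open convex set containing `(x*, 0)` and
`(x*, y*)`, `B` is differentiable on `U` with `B (x*, 0) = 0` and
`‖fderiv ℝ B z‖ ≤ C_G` on `U`, and `‖u₀‖ ≤ v₀`. With
`v (x, y) = (u₀, A₁ y) + B (x, y)`, `H = fderiv ℝ v (x*, y*)`, and
`f = ‖H (v (x*, y*))‖`, we have
`C₋² ‖y*‖ − E(‖y*‖) ≤ f ≤ C₊² ‖y*‖ + E(‖y*‖)` where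
`E ρ = C_G ((2 C₊ + C_G) ρ + v₀)`. -/
theorem fiberwise_distance_estimator_sandwich_differentiable
    {E F : Type*} [NormedAddCommGroup E] [NormedSpace ℝ E]
    [NormedAddCommGroup F] [NormedSpace ℝ F]
    (A₁ : F →L[ℝ] F) (Cminus Cplus : ℝ) (hCminus : 0 ≤ Cminus) (hCplus : 0 ≤ Cplus)
    (hA₁ : ∀ w : F, Cminus * ‖w‖ ≤ ‖A₁ w‖ ∧ ‖A₁ w‖ ≤ Cplus * ‖w‖)
    (xs : E) (ys : F)
    (CG v₀ : ℝ) (hCG : 0 ≤ CG) (hv₀ : 0 ≤ v₀)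
    (U : Set (E × F)) (hUopen : IsOpen U) (hUconv : Convex ℝ U)
    (h0U : ((xs, (0 : F)) : E × F) ∈ U) (hzU : ((xs, ys) : E × F) ∈ U)
    (B : E × F → E × F) (hBdiff : ∀ z ∈ U, DifferentiableAt ℝ B z)
    (hB0 : B (xs, (0 : F)) = 0)
    (hBderiv : ∀ z ∈ U, ‖fderiv ℝ B z‖ ≤ CG)
    (u₀ : E) (hu₀ : ‖u₀‖ ≤ v₀)
    (v : E × F → E × F)
    (hv : v = fun p : E × F => ((u₀, A₁ p.2) : E × F) + B p)
    (H : (E × F) →L[ℝ] (E × F)) (hH : H = fderiv ℝ v (xs, ys))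
    (f : ℝ) (hf : f = ‖H (v (xs, ys))‖)
    (Err : ℝ → ℝ) (hErr : Err = fun ρ => CG * ((2 * Cplus + CG) * ρ + v₀)) :
    Cminus ^ 2 * ‖ys‖ - Err ‖ys‖ ≤ f ∧ f ≤ Cplus ^ 2 * ‖ys‖ + Err ‖ys‖ :=
  fiberwise_distance_estimator_sandwich_differentiable_general A₁ Cminus Cplus hCminus hCplus hA₁ xs
    ys CG v₀ U hUconv h0U hzU B hBdiff hB0 hBderiv u₀ hu₀ v hv H hH f hf Err hErr
end

section
/- Phase entrainment of the coupled Hopf phase oscillators. Let ω ∈ ℝ and γ_θ > 0, and let θ₁, θ₂ : ℝ → ℝ be differentiable functions satisfying θ₁'(t) = ω + γ_θ · sin(θ₁(t) − θ₂(t)) and θ₂'(t) = ω + γ_θ · sin(θ₂(t) − θ₁(t)) for all t ≥ 0. If the initial phase difference satisfies 0 < θ₁(0) − θ₂(0) < 2π, then the phase difference θ₁(t) − θ₂(t) converges to π as t → ∞; in particular the two oscillators phase-lock, so the coupled phase system entrains whenever γ_θ > 0. -/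
/-!
The phase difference `φ = θ₁ - θ₂` solves `φ' = 2γ sin φ`, so `cos φ` is a Lyapunov function:
`(cos φ)' = -2γ sin² φ ≤ 0`. Hence `cos φ` stays below `cos (φ 0) < 1` and `φ` never reaches `0`
or `2π`. Moreover `sin² φ = (1 - cos φ)(1 + cos φ) ≥ (1 - cos (φ 0))(1 + cos φ)`, so `1 + cos φ`
decays exponentially; `cos φ → -1` on `(0, 2π)` forces `φ → π`.
-/

open Real Filter

open Set Topology

lemma antitoneOn_Ici_of_hasDerivAt_nonpos {f f' : ℝ → ℝ} {a : ℝ}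
    (hf : ∀ x, a ≤ x → HasDerivAt f (f' x) x) (hf' : ∀ x, a ≤ x → f' x ≤ 0) :
    AntitoneOn f (Ici a) := by
  refine antitoneOn_of_hasDerivWithinAt_nonpos (f' := f') (convex_Ici a)
    (fun x hx ↦ (hf x hx).continuousAt.continuousWithinAt) (fun x hx ↦ ?_) (fun x hx ↦ ?_)
  all_goals rw [interior_Ici] at hx
  · exact (hf x hx.le).hasDerivWithinAt
  · exact hf' x hx.le

lemma cos_lt_one_of_mem_Ioo {x : ℝ} (hx : x ∈ Ioo 0 (2 * π)) : cos x < 1 := by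
  refine (cos_le_one x).lt_of_ne fun h ↦ hx.1.ne' ?_
  exact (cos_eq_one_iff_of_lt_of_lt (by linarith [pi_pos, hx.1]) hx.2).1 h

lemma abs_sub_pi_eq_arccos_neg_cos {x : ℝ} (h₀ : 0 ≤ x) (h₂π : x ≤ 2 * π) :
    |x - π| = arccos (-cos x) := by
  rw [← cos_sub_pi, ← cos_abs, arccos_cos (abs_nonneg _) (abs_le.2 ⟨by linarith, by linarith⟩)]

lemma tendsto_pi_of_tendsto_cos_neg_one {α : Type*} {l : Filter α} {f : α → ℝ}
    (hf : ∀ᶠ a in l, f a ∈ Icc 0 (2 * π)) (hcos : Tendsto (fun a ↦ cos (f a)) l (𝓝 (-1))) :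
    Tendsto f l (𝓝 π) := by
  have harccos : Tendsto (fun a ↦ arccos (-cos (f a))) l (𝓝 0) := by
    simpa [Function.comp_def] using (continuous_arccos.tendsto 1).comp (by simpa using hcos.neg)
  have habs : Tendsto (fun a ↦ |f a - π|) l (𝓝 0) :=
    harccos.congr' <| hf.mono fun a ha ↦ (abs_sub_pi_eq_arccos_neg_cos ha.1 ha.2).symm
  simpa using ((tendsto_zero_iff_abs_tendsto_zero _).2 habs).add_const π

lemma hasDerivAt_phase_sub {ω γ t : ℝ} {θ₁ θ₂ : ℝ → ℝ}
    (h₁ : HasDerivAt θ₁ (ω + γ * sin (θ₁ t - θ₂ t)) t)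
    (h₂ : HasDerivAt θ₂ (ω + γ * sin (θ₂ t - θ₁ t)) t) :
    HasDerivAt (fun t ↦ θ₁ t - θ₂ t) (2 * γ * sin (θ₁ t - θ₂ t)) t := by
  rw [← neg_sub (θ₁ t), sin_neg] at h₂
  exact (h₁.sub h₂).congr_deriv (by ring)

section SinFlow

variable {φ : ℝ → ℝ} {k : ℝ}

lemma antitoneOn_cos_of_hasDerivAt_mul_sin (hk : 0 ≤ k)
    (hφ : ∀ t, 0 ≤ t → HasDerivAt φ (k * sin (φ t)) t) :
    AntitoneOn (fun t ↦ cos (φ t)) (Ici 0) :=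
  antitoneOn_Ici_of_hasDerivAt_nonpos (fun t ht ↦ (hasDerivAt_cos _).comp t (hφ t ht))
    fun t _ ↦ by nlinarith [sq_nonneg (sin (φ t))]

lemma mem_Ioo_of_hasDerivAt_mul_sin (hk : 0 ≤ k)
    (hφ : ∀ t, 0 ≤ t → HasDerivAt φ (k * sin (φ t)) t) (h0 : φ 0 ∈ Ioo 0 (2 * π))
    {t : ℝ} (ht : 0 ≤ t) : φ t ∈ Ioo 0 (2 * π) := by
  have hcont : ContinuousOn φ (Icc 0 t) := fun s hs ↦ (hφ s hs.1).continuousAt.continuousWithinAt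
  have hcos : ∀ s ∈ Icc 0 t, cos (φ s) < 1 := fun s hs ↦
    (antitoneOn_cos_of_hasDerivAt_mul_sin hk hφ self_mem_Ici hs.1 hs.1).trans_lt
      (cos_lt_one_of_mem_Ioo h0)
  constructor <;> by_contra! h
  · obtain ⟨s, hs, hφs⟩ := intermediate_value_Icc' ht hcont ⟨h, h0.1.le⟩
    simpa [hφs] using hcos s hs
  · obtain ⟨s, hs, hφs⟩ := intermediate_value_Icc ht hcont ⟨h0.2.le, h⟩
    simpa [hφs] using hcos s hs

lemma one_add_cos_le_of_hasDerivAt_mul_sin (hk : 0 ≤ k)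
    (hφ : ∀ t, 0 ≤ t → HasDerivAt φ (k * sin (φ t)) t) {t : ℝ} (ht : 0 ≤ t) :
    1 + cos (φ t) ≤ (1 + cos (φ 0)) * exp (-(k * (1 - cos (φ 0)) * t)) := by
  set c := k * (1 - cos (φ 0))
  have hdecay : AntitoneOn (fun s ↦ (1 + cos (φ s)) * exp (c * s)) (Ici 0) := by
    refine antitoneOn_Ici_of_hasDerivAt_nonpos (fun s hs ↦
      (((hasDerivAt_cos _).comp s (hφ s hs)).const_add 1).mul ((hasDerivAt_id s).const_mul c).exp)
      fun s hs ↦ ?_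
    have hcos : cos (φ s) ≤ cos (φ 0) :=
      antitoneOn_cos_of_hasDerivAt_mul_sin hk hφ self_mem_Ici hs hs
    calc -sin (φ s) * (k * sin (φ s)) * exp (c * s) + (1 + cos (φ s)) * (exp (c * s) * (c * 1))
        = exp (c * s) * (k * (1 + cos (φ s)) * (cos (φ s) - cos (φ 0))) := by
          linear_combination (-k * exp (c * s)) * sin_sq_add_cos_sq (φ s)
      _ ≤ 0 := mul_nonpos_of_nonneg_of_nonpos (exp_pos _).le <|
          mul_nonpos_of_nonneg_of_nonpos (mul_nonneg hk (by linarith [neg_one_le_cos (φ s)]))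
            (by linarith)
  rw [exp_neg, ← div_eq_mul_inv, le_div_iff₀ (exp_pos _)]
  simpa using hdecay self_mem_Ici ht ht

lemma tendsto_cos_of_hasDerivAt_mul_sin (hk : 0 < k)
    (hφ : ∀ t, 0 ≤ t → HasDerivAt φ (k * sin (φ t)) t) (h0 : φ 0 ∈ Ioo 0 (2 * π)) :
    Tendsto (fun t ↦ cos (φ t)) atTop (𝓝 (-1)) := by
  have hc : 0 < k * (1 - cos (φ 0)) := mul_pos hk (by linarith [cos_lt_one_of_mem_Ioo h0])
  have hbound : Tendsto (fun t ↦ (1 + cos (φ 0)) * exp (-(k * (1 - cos (φ 0)) * t)) - 1)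
      atTop (𝓝 (-1)) := by
    simpa using ((tendsto_exp_neg_atTop_nhds_zero.comp
      (tendsto_id.const_mul_atTop hc)).const_mul (1 + cos (φ 0))).sub_const 1
  refine tendsto_of_tendsto_of_tendsto_of_le_of_le' tendsto_const_nhds hbound
    (.of_forall fun t ↦ neg_one_le_cos _) ?_
  filter_upwards [eventually_ge_atTop 0] with t ht
  linarith [one_add_cos_le_of_hasDerivAt_mul_sin hk.le hφ ht]

lemma tendsto_pi_of_hasDerivAt_mul_sin (hk : 0 < k)
    (hφ : ∀ t, 0 ≤ t → HasDerivAt φ (k * sin (φ t)) t) (h0 : φ 0 ∈ Ioo 0 (2 * π)) :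
    Tendsto φ atTop (𝓝 π) :=
  tendsto_pi_of_tendsto_cos_neg_one
    ((eventually_ge_atTop 0).mono fun _ ht ↦
      Ioo_subset_Icc_self (mem_Ioo_of_hasDerivAt_mul_sin hk.le hφ h0 ht))
    (tendsto_cos_of_hasDerivAt_mul_sin hk hφ h0)

end SinFlow

/-- **Phase entrainment of the coupled Hopf phase oscillators.** If `γ_θ > 0` and
the phases satisfy `θᵢ' = ω + γ_θ sin (θᵢ − θⱼ)` for `t ≥ 0`, with initial phase
difference `0 < θ₁ 0 − θ₂ 0 < 2π`, then `θ₁ t − θ₂ t → π` as `t → ∞`. -/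
theorem hopf_phase_entrainment
    (ω γθ : ℝ) (hγθ : 0 < γθ)
    (θ₁ θ₂ : ℝ → ℝ) (hθ₁ : Differentiable ℝ θ₁) (hθ₂ : Differentiable ℝ θ₂)
    (hode₁ : ∀ t : ℝ, 0 ≤ t → deriv θ₁ t = ω + γθ * Real.sin (θ₁ t - θ₂ t))
    (hode₂ : ∀ t : ℝ, 0 ≤ t → deriv θ₂ t = ω + γθ * Real.sin (θ₂ t - θ₁ t))
    (hinit : 0 < θ₁ 0 - θ₂ 0 ∧ θ₁ 0 - θ₂ 0 < 2 * π) :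
    Tendsto (fun t => θ₁ t - θ₂ t) atTop (nhds π) := by
  have hφ : ∀ t, 0 ≤ t →
      HasDerivAt (fun t ↦ θ₁ t - θ₂ t) (2 * γθ * sin (θ₁ t - θ₂ t)) t := fun t ht ↦
    hasDerivAt_phase_sub (hode₁ t ht ▸ (hθ₁ t).hasDerivAt) (hode₂ t ht ▸ (hθ₂ t).hasDerivAt)
  exact tendsto_pi_of_hasDerivAt_mul_sin (by positivity) hφ hinit
end

section
/- Global asymptotic stability of the linear anchoring dynamics for a Hurwitz matrix. Let n be a finite index type and let A be an n × n matrix over ℂ such that every eigenvalue μ in the spectrum of A satisfies Re(μ) < 0 (A is Hurwitz). Then for every vector y ∈ ℂⁿ, the solution t ↦ exp(t • A) • y of the linear system y' = A y tends to 0 as the real time t → ∞. -/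
/-! ℂⁿ is spanned by the generalized eigenspaces of `A`. On the one belonging to `μ`,
`exp (t • A) = exp (t μ) • exp (t • (A - μ • 1))` and `A - μ • 1` is nilpotent, so
`exp (t • A) v` is `exp (t μ)` times a polynomial in `t`, which tends to `0` because `Re μ < 0`. -/

open Filter Topology NormedSpace Finset
open scoped Nat Matrix Matrix.Norms.Operator

namespace Matrix

variable {m 𝕂 : Type*} [Fintype m] [DecidableEq m] [RCLike 𝕂]

theorem exp_add_smul_one (B : Matrix m m 𝕂) (c : 𝕂) : exp (B + c • 1) = exp c • exp B := by
  rw [← Algebra.algebraMap_eq_smul_one, exp_add_of_commute _ _ (Algebra.commutes c B).symm,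
    Algebra.smul_def, algebraMap_exp_comm]
  exact ((Algebra.commute_algebraMap_left c B).exp).eq.symm

theorem exp_mulVec_eq_sum_of_pow_mulVec_eq_zero {B : Matrix m m 𝕂} {v : m → 𝕂} {k : ℕ}
    (h : B ^ k *ᵥ v = 0) : exp B *ᵥ v = ∑ j ∈ range k, (j ! : 𝕂)⁻¹ • (B ^ j *ᵥ v) := by
  have hcont : Continuous (mulVec.addMonoidHomLeft (m := m) v) :=
    continuous_id.matrix_mulVec continuous_const
  have hseries : HasSum (fun j => (j ! : 𝕂)⁻¹ • (B ^ j *ᵥ v)) (exp B *ᵥ v) := by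
    have := (exp_series_hasSum_exp' (𝕂 := 𝕂) B).map _ hcont
    simp only [Function.comp_def, mulVec.addMonoidHomLeft, AddMonoidHom.coe_mk, ZeroHom.coe_mk,
      smul_mulVec] at this
    exact this
  refine hseries.unique (hasSum_sum_of_ne_finset_zero fun j hj => ?_)
  obtain ⟨i, rfl⟩ := Nat.exists_eq_add_of_le (not_lt.mp (mem_range.not.mp hj))
  rw [pow_add, pow_mul_comm, ← mulVec_mulVec, h, mulVec_zero, smul_zero]

end Matrix

theorem Complex.tendsto_pow_mul_exp_mul_atTop_nhds_zero {μ : ℂ} (hμ : μ.re < 0) (j : ℕ) :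
    Tendsto (fun t : ℝ => (t : ℂ) ^ j * Complex.exp (t * μ)) atTop (𝓝 0) := by
  have hreal : Tendsto (fun t : ℝ => t ^ (j : ℝ) * Real.exp (-(-μ.re) * t)) atTop (𝓝 0) :=
    tendsto_rpow_mul_exp_neg_mul_atTop_nhds_zero j (-μ.re) (neg_pos.mpr hμ)
  refine squeeze_zero_norm' ?_ hreal
  filter_upwards [eventually_ge_atTop 0] with t ht
  rw [norm_mul, norm_pow, Complex.norm_exp, Complex.norm_real, Real.norm_of_nonneg ht,
    Real.rpow_natCast, neg_neg, Complex.re_ofReal_mul, mul_comm t]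

theorem Module.End.mem_spectrum_of_mem_maxGenEigenspace {R M : Type*} [CommRing R]
    [AddCommGroup M] [Module R M] {f : Module.End R M} {μ : R} {v : M}
    (hv : v ∈ f.maxGenEigenspace μ) (hv0 : v ≠ 0) : μ ∈ spectrum R f := by
  have hμ : f.HasUnifEigenvalue μ ⊤ := (Submodule.ne_bot_iff _).mpr ⟨v, hv, hv0⟩
  exact ((hasUnifEigenvalue_iff_hasUnifEigenvalue_one ENat.top_pos).mp hμ).mem_spectrum

namespace Matrix

variable {n : Type*} [Fintype n] [DecidableEq n]

theorem tendsto_exp_smul_mulVec_of_pow_sub_smul_one_mulVec_eq_zero (A : Matrix n n ℂ) {μ : ℂ}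
    (hμ : μ.re < 0) {v : n → ℂ} {k : ℕ} (h : (A - μ • 1) ^ k *ᵥ v = 0) :
    Tendsto (fun t : ℝ => exp ((t : ℂ) • A) *ᵥ v) atTop (𝓝 0) := by
  set B := A - μ • 1
  have hexp : ∀ t : ℝ, exp ((t : ℂ) • A) *ᵥ v =
      ∑ j ∈ range k, ((t : ℂ) ^ j * Complex.exp (t * μ)) • ((j ! : ℂ)⁻¹ • (B ^ j *ᵥ v)) := by
    intro t
    have hsplit : (t : ℂ) • A = (t : ℂ) • B + ((t : ℂ) * μ) • 1 := by
      rw [smul_sub, smul_smul, sub_add_cancel]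
    have hnil : ((t : ℂ) • B) ^ k *ᵥ v = 0 := by rw [smul_pow, smul_mulVec, h, smul_zero]
    rw [hsplit, exp_add_smul_one, smul_mulVec, exp_mulVec_eq_sum_of_pow_mulVec_eq_zero hnil,
      smul_sum, Complex.exp_eq_exp_ℂ]
    refine sum_congr rfl fun j _ => ?_
    rw [smul_pow, smul_mulVec, smul_smul, smul_smul, smul_smul]
    congr 1
    ring
  simp only [hexp]
  simpa only [zero_smul, sum_const_zero] using tendsto_finsetSum (range k) fun j _ =>
    (Complex.tendsto_pow_mul_exp_mul_atTop_nhds_zero hμ j).smul_const ((j ! : ℂ)⁻¹ • (B ^ j *ᵥ v))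

theorem tendsto_exp_smul_mulVec_of_mem_maxGenEigenspace {A : Matrix n n ℂ}
    (hA : ∀ μ ∈ spectrum ℂ A, μ.re < 0) {μ : ℂ} {v : n → ℂ}
    (hv : v ∈ Module.End.maxGenEigenspace (toLin' A) μ) :
    Tendsto (fun t : ℝ => exp ((t : ℂ) • A) *ᵥ v) atTop (𝓝 0) := by
  rcases eq_or_ne v 0 with rfl | hv0
  · simp only [mulVec_zero, tendsto_const_nhds]
  have hμ : μ ∈ spectrum ℂ A :=
    spectrum_toLin' A ▸ Module.End.mem_spectrum_of_mem_maxGenEigenspace hv hv0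
  obtain ⟨k, hk⟩ := (Module.End.mem_maxGenEigenspace _ _ _).mp hv
  refine tendsto_exp_smul_mulVec_of_pow_sub_smul_one_mulVec_eq_zero A (hA μ hμ) (k := k) ?_
  rw [← toLin'_apply, toLin'_pow, map_sub, map_smul, toLin'_one]
  exact hk

end Matrix

/-- **Global asymptotic stability of the linear anchoring dynamics for a Hurwitz
matrix.** If every eigenvalue `μ ∈ spectrum ℂ A` satisfies `Re μ < 0`, then for
every `y : n → ℂ` the solution `t ↦ exp (t • A) *ᵥ y` of `y' = A y` tends to `0`
as `t → ∞`. -/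
theorem hurwitz_matrix_exp_tendsto_zero
    {n : Type*} [Fintype n] [DecidableEq n]
    (A : Matrix n n ℂ) (hA : ∀ μ ∈ spectrum ℂ A, μ.re < 0) (y : n → ℂ) :
    Tendsto (fun t : ℝ => (NormedSpace.exp ((t : ℂ) • A)).mulVec y) atTop
      (nhds 0) := by
  have hy : y ∈ ⨆ μ, Module.End.maxGenEigenspace (Matrix.toLin' A) μ := by
    rw [Module.End.iSup_maxGenEigenspace_eq_top]
    trivial
  induction hy using Submodule.iSup_induction' with
  | mem μ v hv => exact Matrix.tendsto_exp_smul_mulVec_of_mem_maxGenEigenspace hA hv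
  | zero => simp only [Matrix.mulVec_zero, tendsto_const_nhds]
  | add v w _ _ hv hw => simpa only [Matrix.mulVec_add, add_zero] using hv.add hw
end
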